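/- arXiv:1210.7634 — 5 statements merged into one kernel-verified Lean document; each statement's English description precedes it below -/
import Mathlib

section
/- Let φ : G → H be a homomorphism of finitely generated groups, and for a group K let FdRep^fin ℂ K denote the full subcategory of FdRep ℂ K consisting of those finite-dimensional complex representations ρ whose image ρ(K) ⊆ GL(V) is a finite group. Then precomposition with φ gives an equivalence of categories FdRep^fin ℂ H → FdRep^fin ℂ G if and only if for every finite group Q, precomposition with φ gives a bijection Hom(H, Q) → Hom(G, Q). -/
/-!
Injectivity of `ψ ↦ ψ ∘ φ` on homomorphisms into finite groups says that each `π ∘ φ`, for `π`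
from `H` to a finite group, is an epimorphism onto the image of `π`, and epimorphisms of finite
groups are surjective. So a representation of `H` with finite image takes the same values on
`φ(G)` as on `H`: equivariance under `G` implies equivariance under `H`, which is fullness.
Conversely, two homomorphisms `ψ₁ ψ₂ : H → Q` agreeing on `G` make the identity of `ℂ[Q]` a
morphism between the pullbacks of the regular representation, and fullness forces `ψ₁ = ψ₂`.

Essential surjectivity is extension of finite-image representations `ρ` of `G` along `φ`, which
is surjectivity of precomposition for the finite group `ρ(G)`. Conversely, extending the pullback
of the regular representation along `χ : G → Q` gives a representation of `H` whose image, by the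
density above, lies in the image of `Q`; it is therefore the pullback along some `ψ` with
`ψ ∘ φ = χ`.
-/

open CategoryTheory

/-- The full subcategory of `FDRep ℂ K` consisting of the finite dimensional complex
representations `ρ` of `K` whose image `ρ(K)` is finite. -/
def FiniteImageFDRep (K : Type) [Group K] : Type 1 :=
  CategoryTheory.ObjectProperty.FullSubcategory (fun V : FDRep ℂ K => (Set.range ⇑V.ρ).Finite)

noncomputable instance (K : Type) [Group K] : Category (FiniteImageFDRep K) :=
  CategoryTheory.ObjectProperty.FullSubcategory.category _

/-- The functor on representations with finite image induced by precomposition with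
a group homomorphism `φ : G →* H`. -/
noncomputable def finiteImageRes {G H : Type} [Group G] [Group H] (φ : G →* H) :
    FiniteImageFDRep H ⥤ FiniteImageFDRep G :=
  CategoryTheory.ObjectProperty.lift _
    (ObjectProperty.ι _ ⋙
      (Action.res (FGModuleCat ℂ) φ : FDRep ℂ H ⥤ FDRep ℂ G))
    (fun V => V.property.subset (by
      rintro x ⟨g, rfl⟩
      exact ⟨φ g, rfl⟩))

universe u

namespace MonoidHom

theorem surjective_of_cancel_of_finite {A B : Type u} [Group A] [Group B] [Finite B]
    {f : A →* B}
    (h : ∀ (K : Type u) [Group K] [Finite K] (g₁ g₂ : B →* K), g₁.comp f = g₂.comp f → g₁ = g₂) :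
    Function.Surjective f := by
  -- The two test homomorphisms in Mathlib's proof that epimorphisms of groups are surjective
  -- land in the permutations of the cosets of the range plus one point, a finite set here.
  open GrpCat.SurjectiveOfEpiAuxs in
  intro b
  by_contra! hb
  let F := GrpCat.ofHom f
  have : Finite (XWithInfinity F) :=
    Finite.of_surjective (fun o => Option.elim o .infinity .fromCoset) <| by
      rintro (y | _)
      exacts [⟨some y, rfl⟩, ⟨none, rfl⟩]
  exact g_ne_h F b (fun ⟨a, ha⟩ => hb a ha) (h _ _ _ (congr_arg GrpCat.Hom.hom (comp_eq F)))

theorem finite_range_toHomUnits {G M : Type*} [Group G] [Monoid M] {ρ : G →* M}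
    (hρ : (Set.range ρ).Finite) : (Set.range ρ.toHomUnits).Finite :=
  (hρ.preimage Units.val_injective.injOn).subset (Set.range_subset_iff.2 fun g => ⟨g, rfl⟩)

theorem exists_comp_eq_of_range_subset {H Q M : Type*} [Monoid H] [Monoid Q] [Monoid M]
    {i : Q →* M} (hi : Function.Injective i) {ρ : H →* M} (hρ : Set.range ρ ⊆ Set.range i) :
    ∃ ψ : H →* Q, i.comp ψ = ρ :=
  let i' := MulEquiv.ofBijective i.mrangeRestrict
    ⟨fun _ _ h => hi (congr_arg Subtype.val h), i.mrangeRestrict_surjective⟩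
  ⟨i'.symm.toMonoidHom.comp (ρ.codRestrict (MonoidHom.mrange i) fun h => hρ ⟨h, rfl⟩),
    ext fun h => congr_arg Subtype.val (i'.apply_symm_apply ⟨ρ h, hρ ⟨h, rfl⟩⟩)⟩

variable {G H : Type u} [Group G] [Group H] {φ : G →* H}

theorem range_comp_eq_of_injective_precomp
    (hφ : ∀ (Q : Type u) [Group Q] [Finite Q], Function.Injective fun ψ : H →* Q => ψ.comp φ)
    {M : Type u} [Monoid M] {ρ : H →* M} (hρ : (Set.range ρ).Finite) :
    Set.range (ρ ∘ φ) = Set.range ρ := by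
  let π := ρ.toHomUnits.rangeRestrict
  have : Finite ρ.toHomUnits.range := (finite_range_toHomUnits hρ).to_subtype
  have hπφ : Function.Surjective (π.comp φ) := surjective_of_cancel_of_finite
    fun K _ _ g₁ g₂ h => (cancel_right ρ.toHomUnits.rangeRestrict_surjective).1 (hφ K h)
  refine (Set.range_comp_subset_range _ _).antisymm ?_
  rintro _ ⟨h, rfl⟩
  obtain ⟨g, hg⟩ := hπφ (π h)
  exact ⟨g, congr_arg (fun u => (u.1 : M)) hg⟩

theorem exists_comp_eq_of_surjective_precomp
    (hφ : ∀ (Q : Type u) [Group Q] [Finite Q], Function.Surjective fun ψ : H →* Q => ψ.comp φ)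
    {M : Type u} [Monoid M] {ρ : G →* M} (hρ : (Set.range ρ).Finite) :
    ∃ ρ' : H →* M, ρ'.comp φ = ρ ∧ Set.range ρ' ⊆ Set.range ρ := by
  have : Finite ρ.toHomUnits.range := (finite_range_toHomUnits hρ).to_subtype
  obtain ⟨ψ, hψ⟩ := hφ _ ρ.toHomUnits.rangeRestrict
  refine ⟨(Units.coeHom M).comp (ρ.toHomUnits.range.subtype.comp ψ), ext fun g => ?_, ?_⟩
  · exact congr_arg (fun u => (u.1 : M)) (DFunLike.congr_fun hψ g)
  · rintro _ ⟨h, rfl⟩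
    obtain ⟨g, hg⟩ := (ψ h).2
    exact ⟨g, congr_arg Units.val hg⟩

end MonoidHom

theorem Representation.leftRegular_injective (k Q : Type*) [Semiring k] [Nontrivial k] [Monoid Q] :
    Function.Injective (Representation.leftRegular k Q) := fun a b hab => by
  have h := congr($hab (MonoidAlgebra.single 1 (1 : k)))
  simp only [Representation.ofMulAction_single, smul_eq_mul, mul_one] at h
  exact MonoidAlgebra.single_left_injective one_ne_zero h

noncomputable def FiniteImageFDRep.leftRegularComp {K Q : Type} [Group K] [Group Q] [Finite Q]
    (ψ : K →* Q) : FiniteImageFDRep K :=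
  ⟨FDRep.of ((Representation.leftRegular ℂ Q).comp ψ),
    (Set.finite_range (Representation.leftRegular ℂ Q)).subset
      (Set.range_comp_subset_range ψ (Representation.leftRegular ℂ Q))⟩

theorem FDRep.action_ρ_eq_iff {R G : Type*} [CommRing R] [Monoid G] {V : FDRep R G} {g g' : G} :
    Action.ρ V g = Action.ρ V g' ↔ V.ρ g = V.ρ g' :=
  ⟨fun h => congr(($h).hom.hom), fun h => InducedCategory.hom_ext (ModuleCat.hom_ext h)⟩

section

variable {G H : Type} [Group G] [Group H] (φ : G →* H)

instance : (finiteImageRes φ).Faithful where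
  map_injective huv := ObjectProperty.hom_ext _ (Action.Hom.ext congr(($huv).hom.hom))

theorem finiteImageRes_full
    (hφ : ∀ (Q : Type) [Group Q] [Finite Q], Function.Injective fun ψ : H →* Q => ψ.comp φ) :
    (finiteImageRes φ).Full where
  map_surjective {X Y} f := by
    have hcomm (h : H) : Action.ρ X.obj h ≫ f.hom.hom = f.hom.hom ≫ Action.ρ Y.obj h := by
      have hfin : (Set.range (X.obj.ρ.prod Y.obj.ρ)).Finite :=
        (X.property.prod Y.property).subset (Set.range_subset_iff.2 fun h => ⟨⟨h, rfl⟩, ⟨h, rfl⟩⟩)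
      obtain ⟨g, hg⟩ : X.obj.ρ.prod Y.obj.ρ h ∈ Set.range (X.obj.ρ.prod Y.obj.ρ ∘ φ) := by
        rw [MonoidHom.range_comp_eq_of_injective_precomp hφ hfin]
        exact ⟨h, rfl⟩
      obtain ⟨hX, hY⟩ := Prod.ext_iff.1 hg
      rw [← FDRep.action_ρ_eq_iff.2 hX, ← FDRep.action_ρ_eq_iff.2 hY]
      exact f.hom.comm g
    exact ⟨ObjectProperty.homMk ⟨f.hom.hom, hcomm⟩, rfl⟩

theorem finiteImageRes_essSurj
    (hφ : ∀ (Q : Type) [Group Q] [Finite Q], Function.Surjective fun ψ : H →* Q => ψ.comp φ) :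
    (finiteImageRes φ).EssSurj where
  mem_essImage X := by
    obtain ⟨ρ, hρφ, hρ⟩ := MonoidHom.exists_comp_eq_of_surjective_precomp hφ X.property
    let Y : FiniteImageFDRep H := ⟨FDRep.of ρ, X.property.subset hρ⟩
    have e : ((finiteImageRes φ).obj Y).obj ≅ X.obj := by
      refine Action.mkIso (Iso.refl _) fun g => ?_
      refine (Category.comp_id _).trans (Eq.trans ?_ (Category.id_comp _).symm)
      exact InducedCategory.hom_ext (ModuleCat.hom_ext (DFunLike.congr_fun hρφ g))
    exact ⟨Y, ⟨(ObjectProperty.ι _).preimageIso e⟩⟩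

theorem injective_precomp_of_full [(finiteImageRes φ).Full] (Q : Type) [Group Q] [Finite Q] :
    Function.Injective fun ψ : H →* Q => ψ.comp φ := by
  intro ψ₁ ψ₂ hψ
  let A₁ := FiniteImageFDRep.leftRegularComp ψ₁
  let A₂ := FiniteImageFDRep.leftRegularComp ψ₂
  let V := FGModuleCat.of ℂ (MonoidAlgebra ℂ Q)
  have hcomm (g : G) : Action.ρ ((finiteImageRes φ).obj A₁).obj g ≫ 𝟙 V =
      𝟙 V ≫ Action.ρ ((finiteImageRes φ).obj A₂).obj g := by
    refine (Category.comp_id _).trans (Eq.trans ?_ (Category.id_comp _).symm)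
    exact InducedCategory.hom_ext (ModuleCat.hom_ext
      (congr_arg (Representation.leftRegular ℂ Q) (DFunLike.congr_fun hψ g)))
  obtain ⟨u, hu⟩ := (finiteImageRes φ).map_surjective (X := A₁) (Y := A₂)
    (ObjectProperty.homMk ⟨𝟙 V, hcomm⟩)
  have hu_id : u.hom.hom = 𝟙 _ := congr(($hu).hom.hom)
  ext h
  have hc : Action.ρ A₁.obj h = Action.ρ A₂.obj h := by
    have := u.hom.comm h
    rwa [hu_id] at this
  exact Representation.leftRegular_injective ℂ Q congr(($hc).hom.hom)

theorem surjective_precomp_of_essSurj [(finiteImageRes φ).EssSurj]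
    (hφ : ∀ (Q : Type) [Group Q] [Finite Q], Function.Injective fun ψ : H →* Q => ψ.comp φ)
    (Q : Type) [Group Q] [Finite Q] : Function.Surjective fun ψ : H →* Q => ψ.comp φ := by
  intro χ
  let A := FiniteImageFDRep.leftRegularComp χ
  let B := (finiteImageRes φ).objPreimage A
  let i := (ObjectProperty.ι _).mapIso ((finiteImageRes φ).objObjPreimageIso A)
  let e : B.obj ≃ₗ[ℂ] MonoidAlgebra ℂ Q := FDRep.isoToLinearEquiv i
  let ρ : H →* Module.End ℂ (MonoidAlgebra ℂ Q) := e.conjRingEquiv.toMonoidHom.comp B.obj.ρ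
  have hρφ (g : G) : ρ (φ g) = Representation.leftRegular ℂ Q (χ g) :=
    (FDRep.Iso.conj_ρ i g).symm
  have hρ : (Set.range ρ).Finite := by
    rw [MonoidHom.coe_comp, Set.range_comp]
    exact B.property.image _
  obtain ⟨ψ, hψ⟩ := MonoidHom.exists_comp_eq_of_range_subset
    (Representation.leftRegular_injective ℂ Q) (ρ := ρ) <| by
      rw [← MonoidHom.range_comp_eq_of_injective_precomp hφ hρ]
      rintro _ ⟨g, rfl⟩
      exact ⟨χ g, (hρφ g).symm⟩
  exact ⟨ψ, MonoidHom.ext fun g => Representation.leftRegular_injective ℂ Q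
    ((DFunLike.congr_fun hψ (φ g)).trans (hρφ g))⟩

end

theorem finiteImageRes_isEquivalence_iff_bijective_on_finite_quotients_general
    {G H : Type} [Group G] [Group H] (φ : G →* H) :
    (finiteImageRes φ).IsEquivalence ↔
      ∀ (Q : Type) [Group Q] [Finite Q],
        Function.Bijective (fun ψ : H →* Q => ψ.comp φ) := by
  constructor
  · intro _
    have hinj := injective_precomp_of_full φ
    exact fun Q _ _ => ⟨hinj Q, surjective_precomp_of_essSurj φ hinj Q⟩
  · intro hbij
    have := finiteImageRes_full φ fun Q _ _ => (hbij Q).1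
    have := finiteImageRes_essSurj φ fun Q _ _ => (hbij Q).2
    exact { }

/-- **Grothendieck–Malcev** (conditions (1) and (3) of Theorem 1):
for a homomorphism `φ : G → H` of finitely generated groups, precomposition with `φ`
is an equivalence between the categories of finite dimensional complex representations
with finite image if and only if precomposition with `φ` is bijective on homomorphisms
into every finite group. -/
theorem finiteImageRes_isEquivalence_iff_bijective_on_finite_quotients
    {G H : Type} [Group G] [Group H] [Group.FG G] [Group.FG H] (φ : G →* H) :
    (finiteImageRes φ).IsEquivalence ↔
      ∀ (Q : Type) [Group Q] [Finite Q],
        Function.Bijective (fun ψ : H →* Q => ψ.comp φ) :=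
  finiteImageRes_isEquivalence_iff_bijective_on_finite_quotients_general φ
end

section
/- Let p be a prime and G a finitely generated abelian group. Then the homomorphism lim_p G → G sending a compatible sequence (x_n)_{n≥0} to its first term x_0 is injective, and its image is exactly the subgroup G[p'] of elements of G of finite order coprime to p. In particular lim_p G ≅ G[p']. -/
/-- Key lemma: if `x` is a sequence in a f.g. abelian group with `p • x (n+1) = x n`,
then `x 0` is annihilated by some positive integer coprime to `p`. -/
private lemma key_coprime_ann (p : ℕ) (hp : p.Prime) {G : Type*} [AddCommGroup G]
    [AddGroup.FG G] (x : ℕ → G) (hx : ∀ n, p • x (n + 1) = x n) :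
    ∃ m : ℕ, 0 < m ∧ m.Coprime p ∧ m • x 0 = 0 := by
  have hfin : Module.Finite ℤ G := Module.Finite.iff_addGroup_fg.mpr ‹_›
  have hnoeth : IsNoetherian ℤ G := inferInstance
  -- the chain of submodules spanned by x n stabilizes
  set f : ℕ →o Submodule ℤ G :=
    ⟨fun n => Submodule.span ℤ {x n}, monotone_nat_of_le_succ (by
      intro n
      rw [Submodule.span_le, Set.singleton_subset_iff]
      rw [← hx n]
      exact nsmul_mem (Submodule.mem_span_singleton_self _) p)⟩ with hf
  obtain ⟨N, hN⟩ := monotone_stabilizes_iff_noetherian.mpr hnoeth f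
  have hmem : x (N + 1) ∈ Submodule.span ℤ {x N} := by
    have h1 : x (N + 1) ∈ f (N + 1) := Submodule.mem_span_singleton_self _
    rw [← hN (N + 1) (Nat.le_succ N)] at h1
    exact h1
  obtain ⟨k, hk⟩ := Submodule.mem_span_singleton.mp hmem
  -- x N = (p * k) • x N
  have h1 : ((1 : ℤ) - p * k) • x N = 0 := by
    have h2 : x N = ((p : ℤ) * k) • x N := by
      conv_lhs => rw [← hx N, ← hk]
      rw [← natCast_zsmul, smul_smul]
    rw [sub_smul, one_smul, sub_eq_zero]
    exact h2
  set c : ℤ := 1 - p * k with hc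
  have hcne : c ≠ 0 := by
    intro h
    have : (p : ℤ) * k = 1 := by omega
    have : (p : ℤ) ∣ 1 := Dvd.intro k this
    have hple : (p : ℤ) ≤ 1 := Int.le_of_dvd one_pos this
    have := hp.two_le
    omega
  have hpnd : ¬ (p : ℤ) ∣ c := by
    intro ⟨d, hd⟩
    have : (p : ℤ) ∣ 1 := ⟨d + k, by rw [hc] at hd; linarith [hd]⟩
    have hple : (p : ℤ) ≤ 1 := Int.le_of_dvd one_pos this
    have := hp.two_le
    omega
  refine ⟨c.natAbs, Int.natAbs_pos.mpr hcne, ?_, ?_⟩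
  · refine Nat.Coprime.symm (hp.coprime_iff_not_dvd.mpr ?_)
    intro hdvd
    exact hpnd ((Int.natCast_dvd_natCast.mpr hdvd).trans (Int.natAbs_dvd.mpr dvd_rfl))
  · have hNann : (c.natAbs : ℤ) • x N = 0 := by
      rcases Int.natAbs_eq c with h | h
      · rw [← h]; exact h1
      · have : (c.natAbs : ℤ) = -c := by omega
        rw [this, neg_smul, h1, neg_zero]
    have hx0 : ∀ n, x 0 = p ^ n • x n := by
      intro n
      induction n with
      | zero => simp
      | succ n ih => rw [ih, ← hx n, pow_succ, mul_smul]
    have h3 : c.natAbs • x N = 0 := by rw [← natCast_zsmul]; exact hNann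
    rw [hx0 N, smul_comm, h3, smul_zero]

/-- For a prime `p` and a finitely generated abelian group `G`, the homomorphism
`lim_p G → G`, `(x_n) ↦ x_0`, from the inverse limit of the multiplication-by-`p`
tower `⋯ → G → G` is injective, and its image consists exactly of the elements of
`G` of finite order coprime to `p`.  In particular `lim_p G ≅ G[p']`. -/
theorem plim_firstTerm_injective_and_range_eq_primeToP_torsion
    (p : ℕ) (hp : p.Prime) {G : Type*} [AddCommGroup G] [AddGroup.FG G] :
    (∀ x y : ℕ → G, (∀ n, p • x (n + 1) = x n) → (∀ n, p • y (n + 1) = y n) →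
        x 0 = y 0 → x = y) ∧
      {g : G | ∃ x : ℕ → G, (∀ n, p • x (n + 1) = x n) ∧ x 0 = g} =
        {g : G | IsOfFinAddOrder g ∧ (addOrderOf g).Coprime p} := by
  constructor
  · -- injectivity
    intro x y hx hy h0
    funext n
    set z : ℕ → G := fun k => x k - y k with hz
    have hzrec : ∀ k, p • z (k + 1) = z k := by
      intro k
      simp only [hz, smul_sub, hx k, hy k]
    -- z n is killed by p ^ n
    have hp0 : ∀ k, p ^ k • z k = 0 := by
      intro k
      induction k with
      | zero => simpa [hz, sub_eq_zero] using h0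
      | succ k ih => rw [pow_succ, mul_smul, hzrec k, ih]
    -- z n is killed by something coprime to p
    obtain ⟨m, hmpos, hmcop, hm0⟩ :=
      key_coprime_ann p hp (fun k => z (n + k)) (fun k => hzrec (n + k))
    simp only [Nat.add_zero] at hm0
    have hd1 : addOrderOf (z n) ∣ m := addOrderOf_dvd_of_nsmul_eq_zero hm0
    have hd2 : addOrderOf (z n) ∣ p ^ n := addOrderOf_dvd_of_nsmul_eq_zero (hp0 n)
    have : addOrderOf (z n) ∣ 1 := by
      have := Nat.dvd_gcd hd1 hd2
      rwa [Nat.Coprime.gcd_eq_one (hmcop.pow_right n)] at this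
    have hzn : z n = 0 := AddMonoid.addOrderOf_eq_one_iff.mp (Nat.dvd_one.mp this)
    exact sub_eq_zero.mp hzn
  · ext g
    simp only [Set.mem_setOf_eq]
    constructor
    · rintro ⟨x, hx, rfl⟩
      obtain ⟨m, hmpos, hmcop, hm0⟩ := key_coprime_ann p hp x hx
      have hfin : IsOfFinAddOrder (x 0) :=
        isOfFinAddOrder_iff_nsmul_eq_zero.mpr ⟨m, hmpos, hm0⟩
      exact ⟨hfin, Nat.Coprime.coprime_dvd_left (addOrderOf_dvd_of_nsmul_eq_zero hm0) hmcop⟩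
    · rintro ⟨hfin, hcop⟩
      set m : ℕ := addOrderOf g with hm
      have hmg : (m : ℤ) • g = 0 := by
        rw [natCast_zsmul]
        exact addOrderOf_nsmul_eq_zero g
      have hcopZ : IsCoprime (p : ℤ) (m : ℤ) := by
        rw [Int.isCoprime_iff_gcd_eq_one, Int.gcd_natCast_natCast]
        exact hcop.symm
      obtain ⟨u, v, huv⟩ := hcopZ
      refine ⟨fun n => u ^ n • g, ?_, by simp⟩
      intro n
      have key : (p : ℤ) * u ^ (n + 1) = u ^ n - (u ^ n * v) * m := by
        have : u * p = 1 - v * m := by linarith [huv]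
        calc (p : ℤ) * u ^ (n + 1) = u ^ n * (u * p) := by ring
        _ = u ^ n - (u ^ n * v) * m := by rw [this]; ring
      calc p • (u ^ (n + 1) • g) = ((p : ℤ) * u ^ (n + 1)) • g := by
            rw [← natCast_zsmul, smul_smul]
        _ = (u ^ n) • g - (u ^ n * v) • ((m : ℤ) • g) := by
            rw [key, sub_smul, smul_smul]
        _ = (u ^ n) • g := by rw [hmg, smul_zero, sub_zero]
end

section
/- Let p be a prime and f : A → B a surjective homomorphism of abelian groups whose kernel is finite. Then the induced homomorphism lim_p A → lim_p B is surjective; that is, for every sequence (b_n)_{n≥0} in B with p·b_{n+1} = b_n for all n, there exists a sequence (a_n)_{n≥0} in A with p·a_{n+1} = a_n and f(a_n) = b_n for all n. -/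
open CategoryTheory

/-! The fibres of `f` over the `b n` are cosets of the finite kernel, hence finite and nonempty,
and multiplication by `p` maps the fibre over `b (n + 1)` into the fibre over `b n`.
Kőnig's lemma for this tower of finite nonempty sets yields a compatible choice of preimages. -/

theorem exists_seq_forall_proj_succ_of_finite {X : ℕ → Type*} [∀ n, Finite (X n)]
    [∀ n, Nonempty (X n)] (π : ∀ n, X (n + 1) → X n) :
    ∃ x : ∀ n, X n, ∀ n, π n (x (n + 1)) = x n := by
  let F : ℕᵒᵖ ⥤ Type _ := Functor.ofOpSequence (fun n => TypeCat.ofHom (π n))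
  have : ∀ j : ℕᵒᵖ, Finite (F.obj j) := fun j => inferInstanceAs (Finite (X j.unop))
  have : ∀ j : ℕᵒᵖ, Nonempty (F.obj j) := fun j => inferInstanceAs (Nonempty (X j.unop))
  obtain ⟨s, hs⟩ := nonempty_sections_of_finite_inverse_system F
  refine ⟨fun n => s ⟨n⟩, fun n => ?_⟩
  have h := hs (homOfLE (Nat.le_add_right n 1)).op
  rwa [Functor.ofOpSequence_map_homOfLE_succ] at h

theorem AddMonoidHom.finite_preimage_singleton_of_finite_ker {A B : Type*} [AddGroup A]
    [AddGroup B] (f : A →+ B) (hker : (f.ker : Set A).Finite) (b : B) :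
    (f ⁻¹' {b}).Finite := by
  rcases (f ⁻¹' {b}).eq_empty_or_nonempty with h | ⟨a₀, ha₀⟩
  · simp [h]
  refine (hker.image (a₀ + ·)).subset fun a ha => ⟨-a₀ + a, ?_, by simp⟩
  simp_all [AddMonoidHom.mem_ker]

theorem plim_map_surjective_of_surjective_of_finite_ker_general
    (p : ℕ) {A B : Type*} [AddCommGroup A] [AddCommGroup B]
    (f : A →+ B) (hf : Function.Surjective f) (hker : (f.ker : Set A).Finite) :
    ∀ b : ℕ → B, (∀ n, p • b (n + 1) = b n) →
      ∃ a : ℕ → A, (∀ n, p • a (n + 1) = a n) ∧ ∀ n, f (a n) = b n := by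
  intro b hb
  have : ∀ n, Finite (f ⁻¹' {b n}) := fun n =>
    (f.finite_preimage_singleton_of_finite_ker hker (b n)).to_subtype
  have : ∀ n, Nonempty (f ⁻¹' {b n}) := fun n =>
    ((Set.singleton_nonempty _).preimage hf).to_subtype
  obtain ⟨a, ha⟩ := exists_seq_forall_proj_succ_of_finite (X := fun n => f ⁻¹' {b n})
    fun n x => ⟨p • x.1, by
      rw [Set.mem_preimage, map_nsmul, Set.mem_singleton_iff.mp x.2, hb]; rfl⟩
  exact ⟨fun n => a n, fun n => congrArg Subtype.val (ha n), fun n => (a n).2⟩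

/-- If `f : A → B` is a surjective homomorphism of abelian groups with finite kernel,
then the induced homomorphism `lim_p A → lim_p B` on the inverse limits of the
multiplication-by-`p` towers is surjective. -/
theorem plim_map_surjective_of_surjective_of_finite_ker
    (p : ℕ) (hp : p.Prime) {A B : Type*} [AddCommGroup A] [AddCommGroup B]
    (f : A →+ B) (hf : Function.Surjective f) (hker : (f.ker : Set A).Finite) :
    ∀ b : ℕ → B, (∀ n, p • b (n + 1) = b n) →
      ∃ a : ℕ → A, (∀ n, p • a (n + 1) = a n) ∧ ∀ n, f (a n) = b n :=
  plim_map_surjective_of_surjective_of_finite_ker_general p f hf hker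
end

section
/- Let p be a prime and 0 → D → G → F → 0 a short exact sequence of abelian groups such that multiplication by p is surjective on D (for example, D divisible). Then the induced sequence 0 → lim_p D → lim_p G → lim_p F → 0 is exact; in particular the induced map lim_p G → lim_p F is surjective. -/
/-- If `0 → D → G → F → 0` is a short exact sequence of abelian groups such that
multiplication by `p` is surjective on `D`, then the induced sequence
`0 → lim_p D → lim_p G → lim_p F → 0` of inverse limits of the
multiplication-by-`p` towers is exact; in particular `lim_p G → lim_p F` is
surjective. -/
theorem plim_exact_of_shortExact_of_pDivisible_kernel
    (p : ℕ) (hp : p.Prime) {D G F : Type*}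
    [AddCommGroup D] [AddCommGroup G] [AddCommGroup F]
    (i : D →+ G) (π : G →+ F)
    (hi : Function.Injective i) (hπ : Function.Surjective π)
    (hexact : ∀ x : G, π x = 0 ↔ ∃ d : D, i d = x)
    (hdiv : ∀ d : D, ∃ d' : D, p • d' = d) :
    -- exactness at `lim_p D` : the induced map is injective
    (∀ x y : ℕ → D, (∀ n, p • x (n + 1) = x n) → (∀ n, p • y (n + 1) = y n) →
        (∀ n, i (x n) = i (y n)) → x = y) ∧
    -- exactness at `lim_p G`
    (∀ x : ℕ → G, (∀ n, p • x (n + 1) = x n) →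
        ((∀ n, π (x n) = 0) ↔
          ∃ d : ℕ → D, (∀ n, p • d (n + 1) = d n) ∧ ∀ n, i (d n) = x n)) ∧
    -- exactness at `lim_p F` : the induced map is surjective
    (∀ z : ℕ → F, (∀ n, p • z (n + 1) = z n) →
        ∃ x : ℕ → G, (∀ n, p • x (n + 1) = x n) ∧ ∀ n, π (x n) = z n) := by
  refine ⟨?_, ?_, ?_⟩
  · intro x y _ _ h
    funext n; exact hi (h n)
  · intro x hx
    constructor
    · intro h0
      have hd : ∀ n, ∃ d, i d = x n := fun n => (hexact (x n)).1 (h0 n)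
      choose d hd using hd
      refine ⟨d, fun n => ?_, hd⟩
      apply hi
      rw [map_nsmul, hd, hd, hx]
    · rintro ⟨d, _, hd2⟩ n
      rw [← hd2 n]
      exact (hexact _).2 ⟨d n, rfl⟩
  · intro z hz
    choose y hy using fun n => hπ (z n)
    have hker : ∀ n, ∃ d : D, i d = p • y (n+1) - y n := by
      intro n
      apply (hexact _).1
      rw [map_sub, map_nsmul, hy, hy, hz, sub_self]
    choose d hd using hker
    choose s hs using hdiv
    let e : ℕ → D := fun n => Nat.rec (0 : D) (fun n en => s (en - d n)) n
    have he : ∀ n, p • e (n+1) = e n - d n := fun n => hs _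
    refine ⟨fun n => y n + i (e n), fun n => ?_, fun n => ?_⟩
    · show p • (y (n+1) + i (e (n+1))) = y n + i (e n)
      rw [smul_add, ← map_nsmul, he, map_sub, hd]
      abel
    · show π (y n + i (e n)) = z n
      rw [map_add, hy]
      have h0 : π (i (e n)) = 0 := (hexact _).2 ⟨_, rfl⟩
      rw [h0, add_zero]
end

section
/- Let p be a prime. Consider a commutative diagram of abelian groups consisting of two short exact sequences 0 → D₁ → G₁ → F₁ → 0 and 0 → D₂ → G₂ → F₂ → 0 and vertical homomorphisms f : D₁ → D₂, g : G₁ → G₂, h : F₁ → F₂ making both squares commute. Assume: F₁ and F₂ are finitely generated; multiplication by p is surjective on D₁ and on D₂; (a) f is surjective with finite kernel; (b) ker(g) contains no nonzero element of finite order coprime to p; (c) the restriction of h to the prime-to-p torsion subgroups, h : F₁[p'] → F₂[p'], is surjective. Then the induced homomorphism lim_p g : lim_p G₁ → lim_p G₂ is an isomorphism. -/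
/-!
In a finitely generated group the terms of a `p`-tower are torsion of order prime to `p`,
uniformly along the tower, and multiplication by `p` is invertible on such torsion.

Injectivity: for a tower `z` in `ker g`, some `m` prime to `p` sends `z` into `i₁ (ker f)`; as
`z n = p ^ a • z (n + a)`, the `p`-primary part of the finite group `ker f` drops out, so `z n` is
torsion of order prime to `p` and vanishes by (b).

Surjectivity: by (c) the image in `F₂` of a tower `u` lifts to a tower in `F₁`; termwise lifts to
`G₁` then fail to form a tower only by defects in `i₁ (ker f)`, and after multiplying by `p ^ a`
these defects are prime-to-`p` torsion in `ker g`, where the lifts can be corrected.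
-/

open Function

section Towers

variable {G H : Type*} [AddCommGroup G] [AddCommGroup H]

/-- `x` is an element of `lim_p G`. -/
def IsPTower (p : ℕ) (x : ℕ → G) : Prop :=
  ∀ n, p • x (n + 1) = x n

theorem Nat.Coprime.exists_nsmul_zsmul_eq_self {p q : ℕ} (hpq : p.Coprime q) :
    ∃ c : ℤ, ∀ y : G, q • y = 0 → p • c • y = y := by
  obtain ⟨u, v, huv⟩ := hpq.isCoprime
  refine ⟨u, fun y hy => ?_⟩
  calc p • u • y = (u * p + v * q) • y := by
        rw [add_smul, mul_smul v, natCast_zsmul, hy, smul_zero, add_zero, mul_smul,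
          natCast_zsmul, smul_comm]
    _ = y := by rw [huv, one_smul]

theorem isOfFinAddOrder_and_coprime_of_nsmul_eq_zero {p m : ℕ} {x : G} (hp : p ≠ 1)
    (hmp : m.Coprime p) (hx : m • x = 0) :
    IsOfFinAddOrder x ∧ (addOrderOf x).Coprime p := by
  have hm : 0 < m := Nat.pos_of_ne_zero fun h0 => hp (by rwa [h0, Nat.coprime_zero_left] at hmp)
  exact ⟨isOfFinAddOrder_iff_nsmul_eq_zero.mpr ⟨m, hm, hx⟩,
    hmp.coprime_dvd_left (addOrderOf_dvd_of_nsmul_eq_zero hx)⟩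

theorem AddSubgroup.exists_coprime_nsmul_pow_nsmul_eq_zero {K : AddSubgroup G}
    (hK : (K : Set G).Finite) {p : ℕ} (hp : p.Prime) :
    ∃ a q : ℕ, q.Coprime p ∧ ∀ k ∈ K, q • p ^ a • k = 0 := by
  have := hK.to_subtype
  have hN : Nat.card K ≠ 0 := Nat.card_pos.ne'
  refine ⟨(Nat.card K).factorization p, _, (Nat.coprime_ordCompl hp hN).symm, fun k hk => ?_⟩
  rw [smul_smul, mul_comm, Nat.ordProj_mul_ordCompl_eq_self]
  exact congrArg Subtype.val (card_nsmul_eq_zero' (x := (⟨k, hk⟩ : K)))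

theorem exists_isPTower_of_nsmul_eq_zero {p m : ℕ} (hmp : m.Coprime p) {v₀ : G}
    (hv₀ : m • v₀ = 0) : ∃ v : ℕ → G, IsPTower p v ∧ v 0 = v₀ ∧ ∀ n, m • v n = 0 := by
  obtain ⟨c, hc⟩ := hmp.symm.exists_nsmul_zsmul_eq_self (G := G)
  have hmv : ∀ n : ℕ, m • c ^ n • v₀ = 0 := fun n => by rw [smul_comm, hv₀, smul_zero]
  refine ⟨fun n => c ^ n • v₀, fun n => ?_, by simp, hmv⟩
  change p • c ^ (n + 1) • v₀ = c ^ n • v₀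
  rw [pow_succ', mul_smul, hc _ (hmv n)]

/-- Since multiplication by `p` is invertible on `K`, the correction can be made one index at a
time. -/
theorem exists_isPTower_sub_mem {p q : ℕ} (hpq : p.Coprime q) {K : AddSubgroup G}
    (hK : ∀ y ∈ K, q • y = 0) {w : ℕ → G} (hw : ∀ n, p • w (n + 1) - w n ∈ K) :
    ∃ x, IsPTower p x ∧ ∀ n, x n - w n ∈ K := by
  obtain ⟨c, hc⟩ := hpq.exists_nsmul_zsmul_eq_self (G := G)
  let x : ℕ → G := fun n => n.rec (w 0) fun n xn => w (n + 1) - c • (p • w (n + 1) - xn)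
  have hx_succ : ∀ n, x (n + 1) = w (n + 1) - c • (p • w (n + 1) - x n) := fun n => rfl
  have hdefect : ∀ n, x n - w n ∈ K → p • w (n + 1) - x n ∈ K := fun n hn => by
    simpa using K.sub_mem (hw n) hn
  have hxw : ∀ n, x n - w n ∈ K := by
    intro n
    induction n with
    | zero => simp [x]
    | succ n ih => simpa [hx_succ] using K.neg_mem (K.zsmul_mem (hdefect n ih) c)
  refine ⟨x, fun n => ?_, hxw⟩
  rw [hx_succ, smul_sub, hc _ (hK _ (hdefect n (hxw n)))]
  abel

namespace IsPTower

variable {p : ℕ} {x y : ℕ → G}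

theorem pow_smul_add (hx : IsPTower p x) (k n : ℕ) : p ^ k • x (n + k) = x n := by
  induction k with
  | zero => simp
  | succ k ih => rw [pow_succ, mul_smul, ← add_assoc, hx, ih]

theorem sub (hx : IsPTower p x) (hy : IsPTower p y) : IsPTower p (x - y) := fun n => by
  simp only [Pi.sub_apply, smul_sub, hx n, hy n]

theorem map (hx : IsPTower p x) (φ : G →+ H) : IsPTower p fun n => φ (x n) := fun n => by
  simp only [← map_nsmul, hx n]

theorem eq_zero_of_nsmul_eq_zero (hx : IsPTower p x) (hx₀ : x 0 = 0) {m : ℕ}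
    (hmp : m.Coprime p) (hmx : ∀ n, m • x n = 0) (n : ℕ) : x n = 0 := by
  have hpx : p ^ n • x n = 0 := by simpa [hx₀] using hx.pow_smul_add n 0
  have hord : (addOrderOf (x n)).Coprime (p ^ n) :=
    (hmp.pow_right n).coprime_dvd_left (addOrderOf_dvd_of_nsmul_eq_zero (hmx n))
  exact AddMonoid.addOrderOf_eq_one_iff.mp
    (hord.eq_one_of_dvd (addOrderOf_dvd_of_nsmul_eq_zero hpx))

/-- The cyclic subgroups spanned by the `x n` form an ascending chain; once it stabilizes at
`x N`, we get `x N = p • c • x N`, so `1 - c p`, which is prime to `p`, kills the tower. -/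
theorem exists_nsmul_eq_zero [AddGroup.FG G] (hx : IsPTower p x) :
    ∃ m : ℕ, m.Coprime p ∧ ∀ n, m • x n = 0 := by
  have : Module.Finite ℤ G := Module.Finite.iff_addGroup_fg.mpr ‹_›
  let S : ℕ →o Submodule ℤ G :=
    ⟨fun n => Submodule.span ℤ {x n}, monotone_nat_of_le_succ fun n => by
      rw [Submodule.span_singleton_le_iff_mem, ← hx n]
      exact Submodule.smul_of_tower_mem _ p (Submodule.mem_span_singleton_self _)⟩
  obtain ⟨N, hN⟩ := monotone_stabilizes_iff_noetherian.mpr inferInstance S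
  have hmul : ∀ n, ∃ a : ℤ, a • x N = x (n + N) := fun n => by
    rw [← Submodule.mem_span_singleton]
    change x (n + N) ∈ S N
    rw [hN (n + N) (by omega)]
    exact Submodule.mem_span_singleton_self _
  obtain ⟨c, hc⟩ := hmul 1
  set k : ℤ := 1 - c * p
  have hk : k • x N = 0 := by
    have hpc : p • c • x N = x N := by rw [hc, add_comm, hx N]
    rw [sub_smul, one_smul, mul_comm c, mul_smul, natCast_zsmul, hpc, sub_self]
  have hkx : ∀ n, k • x n = 0 := fun n => by
    obtain ⟨a, ha⟩ := hmul n
    rw [← hx.pow_smul_add N n, ← ha, smul_comm k, smul_comm k, hk, smul_zero, smul_zero]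
  have hkp : k.natAbs.Coprime p := by
    have : IsCoprime k p := ⟨1, c, by ring⟩
    simpa [Int.gcd_eq_natAbs] using Int.isCoprime_iff_gcd_eq_one.mp this
  exact ⟨k.natAbs, hkp, fun n => natAbs_nsmul_eq_zero.mpr (hkx n)⟩

theorem exists_lift {p m : ℕ} {h : G →+ H}
    (hh : ∀ y : H, IsOfFinAddOrder y → (addOrderOf y).Coprime p →
        ∃ x : G, IsOfFinAddOrder x ∧ (addOrderOf x).Coprime p ∧ h x = y)
    {y : ℕ → H} (hy : IsPTower p y) (hp : p ≠ 1) (hmp : m.Coprime p) (hmy : ∀ n, m • y n = 0) :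
    ∃ v : ℕ → G, IsPTower p v ∧ ∀ n, h (v n) = y n := by
  have hy₀ := isOfFinAddOrder_and_coprime_of_nsmul_eq_zero hp hmp (hmy 0)
  obtain ⟨v₀, -, hv₀p, hv₀y⟩ := hh (y 0) hy₀.1 hy₀.2
  obtain ⟨v, hv, hv0, hMv⟩ := exists_isPTower_of_nsmul_eq_zero (hmp.mul_left hv₀p) (v₀ := v₀)
    (by rw [mul_smul, addOrderOf_nsmul_eq_zero, smul_zero])
  refine ⟨v, hv, fun n => sub_eq_zero.mp ?_⟩
  refine ((hv.map h).sub hy).eq_zero_of_nsmul_eq_zero ?_ (hmp.mul_left hv₀p) (fun n => ?_) n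
  · simp [hv0, hv₀y]
  · rw [Pi.sub_apply, smul_sub, ← map_nsmul, hMv, map_zero, mul_comm, mul_smul, hmy,
      smul_zero, sub_zero]

end IsPTower

end Towers

section Diagram

variable {D₁ G₁ F₁ D₂ G₂ F₂ : Type*}
  [AddCommGroup D₁] [AddCommGroup G₁] [AddCommGroup F₁]
  [AddCommGroup D₂] [AddCommGroup G₂] [AddCommGroup F₂]
  {i₁ : D₁ →+ G₁} {π₁ : G₁ →+ F₁} {i₂ : D₂ →+ G₂} {π₂ : G₂ →+ F₂}
  {f : D₁ →+ D₂} {g : G₁ →+ G₂} {h : F₁ →+ F₂} {p : ℕ}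

theorem exists_map_eq_and_map_eq_of_surjective (hπ₁ : Surjective π₁)
    (hex₁ : ∀ x : G₁, π₁ x = 0 ↔ ∃ d : D₁, i₁ d = x)
    (hex₂ : ∀ x : G₂, π₂ x = 0 ↔ ∃ d : D₂, i₂ d = x)
    (hsq₁ : ∀ d : D₁, g (i₁ d) = i₂ (f d)) (hsq₂ : ∀ x : G₁, h (π₁ x) = π₂ (g x))
    (hf : Surjective f) {y : G₂} {v : F₁} (hyv : h v = π₂ y) :
    ∃ x, g x = y ∧ π₁ x = v := by
  obtain ⟨x₀, rfl⟩ := hπ₁ v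
  obtain ⟨e, he⟩ := (hex₂ (g x₀ - y)).mp (by rw [map_sub, ← hsq₂, hyv, sub_self])
  obtain ⟨d, rfl⟩ := hf e
  refine ⟨x₀ - i₁ d, by rw [map_sub, hsq₁, he, sub_sub_cancel], ?_⟩
  rw [map_sub, (hex₁ _).mpr ⟨d, rfl⟩, sub_zero]

theorem IsPTower.eq_zero_of_map_eq_zero [AddGroup.FG F₁] (hp : p.Prime)
    (hex₁ : ∀ x : G₁, π₁ x = 0 ↔ ∃ d : D₁, i₁ d = x) (hi₂ : Injective i₂)
    (hsq₁ : ∀ d : D₁, g (i₁ d) = i₂ (f d)) (hfker : (f.ker : Set D₁).Finite)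
    (hg : ∀ x : G₁, g x = 0 → IsOfFinAddOrder x → (addOrderOf x).Coprime p → x = 0)
    {z : ℕ → G₁} (hz : IsPTower p z) (hgz : ∀ n, g (z n) = 0) (n : ℕ) : z n = 0 := by
  obtain ⟨m, hmp, hmz⟩ := (hz.map π₁).exists_nsmul_eq_zero
  obtain ⟨a, q, hqp, hq⟩ := f.ker.exists_coprime_nsmul_pow_nsmul_eq_zero hfker hp
  obtain ⟨d, hd⟩ := (hex₁ (m • z (n + a))).mp (by rw [map_nsmul, hmz])
  have hfd : f d = 0 := hi₂ (by rw [← hsq₁, hd, map_nsmul, hgz, smul_zero, map_zero])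
  have hqm : (q * m) • z n = 0 := by
    rw [← hz.pow_smul_add a n, mul_smul, smul_comm m, ← hd, ← map_nsmul, ← map_nsmul, hq d hfd,
      map_zero]
  have hzn := isOfFinAddOrder_and_coprime_of_nsmul_eq_zero hp.ne_one (hqp.mul_left hmp) hqm
  exact hg _ (hgz n) hzn.1 hzn.2

theorem IsPTower.exists_isPTower_map_eq [AddGroup.FG F₂] (hp : p.Prime) (hπ₁ : Surjective π₁)
    (hex₁ : ∀ x : G₁, π₁ x = 0 ↔ ∃ d : D₁, i₁ d = x)
    (hi₂ : Injective i₂) (hex₂ : ∀ x : G₂, π₂ x = 0 ↔ ∃ d : D₂, i₂ d = x)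
    (hsq₁ : ∀ d : D₁, g (i₁ d) = i₂ (f d)) (hsq₂ : ∀ x : G₁, h (π₁ x) = π₂ (g x))
    (hfsurj : Surjective f) (hfker : (f.ker : Set D₁).Finite)
    (hh : ∀ y : F₂, IsOfFinAddOrder y → (addOrderOf y).Coprime p →
        ∃ x : F₁, IsOfFinAddOrder x ∧ (addOrderOf x).Coprime p ∧ h x = y)
    {u : ℕ → G₂} (hu : IsPTower p u) : ∃ x, IsPTower p x ∧ ∀ n, g (x n) = u n := by
  obtain ⟨m, hmp, hmu⟩ := (hu.map π₂).exists_nsmul_eq_zero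
  obtain ⟨v, hv, hhv⟩ := (hu.map π₂).exists_lift hh hp.ne_one hmp hmu
  choose x' hgx' hπx' using fun n =>
    exists_map_eq_and_map_eq_of_surjective hπ₁ hex₁ hex₂ hsq₁ hsq₂ hfsurj (hhv n)
  have hdefect : ∀ n, ∃ d, f d = 0 ∧ i₁ d = p • x' (n + 1) - x' n := fun n => by
    obtain ⟨d, hd⟩ := (hex₁ (p • x' (n + 1) - x' n)).mp
      (by rw [map_sub, map_nsmul, hπx', hπx', hv n, sub_self])
    refine ⟨d, hi₂ ?_, hd⟩
    rw [← hsq₁, hd, map_sub, map_nsmul, hgx', hgx', hu n, sub_self, map_zero]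
  obtain ⟨a, q, hqp, hq⟩ := f.ker.exists_coprime_nsmul_pow_nsmul_eq_zero hfker hp
  set K : AddSubgroup G₁ := g.ker ⊓ (nsmulAddMonoidHom q).ker
  have hKq : ∀ y ∈ K, q • y = 0 := fun y hy => (AddSubgroup.mem_inf.mp hy).2
  -- Multiplying by `p ^ a` kills the `p`-primary part of the defects, which lie in `i₁ (ker f)`.
  have hwK : ∀ n, p • p ^ a • x' (n + 1 + a) - p ^ a • x' (n + a) ∈ K := fun n => by
    obtain ⟨d, hfd, hd⟩ := hdefect (n + a)
    rw [Nat.add_right_comm, smul_comm, ← smul_sub, ← hd, ← map_nsmul]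
    refine AddSubgroup.mem_inf.mpr ⟨?_, ?_⟩
    · rw [AddMonoidHom.mem_ker, hsq₁, map_nsmul, hfd, smul_zero, map_zero]
    · rw [AddMonoidHom.mem_ker, nsmulAddMonoidHom_apply, ← map_nsmul, hq d hfd, map_zero]
  obtain ⟨x, hx, hxw⟩ := exists_isPTower_sub_mem hqp.symm hKq (w := fun n => p ^ a • x' (n + a)) hwK
  refine ⟨x, hx, fun n => ?_⟩
  rw [← sub_add_cancel (x n) (p ^ a • x' (n + a)), map_add, (hxw n).1, zero_add, map_nsmul, hgx',
    hu.pow_smul_add]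

end Diagram

theorem plim_map_bijective_of_diagram_general
    (p : ℕ) (hp : p.Prime)
    {D₁ G₁ F₁ D₂ G₂ F₂ : Type*}
    [AddCommGroup D₁] [AddCommGroup G₁] [AddCommGroup F₁]
    [AddCommGroup D₂] [AddCommGroup G₂] [AddCommGroup F₂]
    [AddGroup.FG F₁] [AddGroup.FG F₂]
    (i₁ : D₁ →+ G₁) (π₁ : G₁ →+ F₁) (i₂ : D₂ →+ G₂) (π₂ : G₂ →+ F₂)
    (f : D₁ →+ D₂) (g : G₁ →+ G₂) (h : F₁ →+ F₂)
    -- the rows are short exact sequences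
    (hπ₁ : Function.Surjective π₁)
    (hex₁ : ∀ x : G₁, π₁ x = 0 ↔ ∃ d : D₁, i₁ d = x)
    (hi₂ : Function.Injective i₂)
    (hex₂ : ∀ x : G₂, π₂ x = 0 ↔ ∃ d : D₂, i₂ d = x)
    -- the squares commute
    (hsq₁ : ∀ d : D₁, g (i₁ d) = i₂ (f d)) (hsq₂ : ∀ x : G₁, h (π₁ x) = π₂ (g x))
    -- (a) `f` is surjective with finite kernel
    (hfsurj : Function.Surjective f) (hfker : (f.ker : Set D₁).Finite)
    -- (b) `ker g` has no nonzero element of finite order coprime to `p`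
    (hg : ∀ x : G₁, g x = 0 → IsOfFinAddOrder x → (addOrderOf x).Coprime p → x = 0)
    -- (c) `h : F₁[p'] → F₂[p']` is surjective
    (hh : ∀ y : F₂, IsOfFinAddOrder y → (addOrderOf y).Coprime p →
        ∃ x : F₁, IsOfFinAddOrder x ∧ (addOrderOf x).Coprime p ∧ h x = y) :
    -- the induced map `lim_p G₁ → lim_p G₂` is injective …
    (∀ x y : ℕ → G₁, (∀ n, p • x (n + 1) = x n) → (∀ n, p • y (n + 1) = y n) →
        (∀ n, g (x n) = g (y n)) → x = y) ∧
    -- … and surjective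
    (∀ u : ℕ → G₂, (∀ n, p • u (n + 1) = u n) →
        ∃ x : ℕ → G₁, (∀ n, p • x (n + 1) = x n) ∧ ∀ n, g (x n) = u n) := by
  refine ⟨fun x y hx hy hxy => funext fun n => sub_eq_zero.mp ?_, fun u hu =>
    IsPTower.exists_isPTower_map_eq hp hπ₁ hex₁ hi₂ hex₂ hsq₁ hsq₂ hfsurj hfker hh hu⟩
  exact IsPTower.eq_zero_of_map_eq_zero hp hex₁ hi₂ hsq₁ hfker hg (IsPTower.sub hx hy)
    (fun n => by rw [Pi.sub_apply, map_sub, hxy, sub_self]) n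

/-- Lemma 3.11 of the paper.  Given a map of short exact sequences of abelian groups
`0 → Dᵢ → Gᵢ → Fᵢ → 0` (`i = 1, 2`) with vertical maps `f, g, h`, where `F₁, F₂` are
finitely generated, multiplication by `p` is surjective on `D₁` and `D₂`,
(a) `f` is surjective with finite kernel, (b) `ker g` contains no nonzero element of
finite order coprime to `p`, and (c) `h` is surjective on prime-to-`p` torsion, the
induced map `lim_p G₁ → lim_p G₂` on the inverse limits of the multiplication-by-`p`
towers is an isomorphism (it is both injective and surjective). -/
theorem plim_map_bijective_of_diagram
    (p : ℕ) (hp : p.Prime)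
    {D₁ G₁ F₁ D₂ G₂ F₂ : Type*}
    [AddCommGroup D₁] [AddCommGroup G₁] [AddCommGroup F₁]
    [AddCommGroup D₂] [AddCommGroup G₂] [AddCommGroup F₂]
    [AddGroup.FG F₁] [AddGroup.FG F₂]
    (i₁ : D₁ →+ G₁) (π₁ : G₁ →+ F₁) (i₂ : D₂ →+ G₂) (π₂ : G₂ →+ F₂)
    (f : D₁ →+ D₂) (g : G₁ →+ G₂) (h : F₁ →+ F₂)
    -- the rows are short exact sequences
    (hi₁ : Function.Injective i₁) (hπ₁ : Function.Surjective π₁)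
    (hex₁ : ∀ x : G₁, π₁ x = 0 ↔ ∃ d : D₁, i₁ d = x)
    (hi₂ : Function.Injective i₂) (hπ₂ : Function.Surjective π₂)
    (hex₂ : ∀ x : G₂, π₂ x = 0 ↔ ∃ d : D₂, i₂ d = x)
    -- the squares commute
    (hsq₁ : ∀ d : D₁, g (i₁ d) = i₂ (f d)) (hsq₂ : ∀ x : G₁, h (π₁ x) = π₂ (g x))
    -- multiplication by `p` is surjective on `D₁` and `D₂`
    (hD₁ : ∀ d : D₁, ∃ d' : D₁, p • d' = d) (hD₂ : ∀ d : D₂, ∃ d' : D₂, p • d' = d)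
    -- (a) `f` is surjective with finite kernel
    (hfsurj : Function.Surjective f) (hfker : (f.ker : Set D₁).Finite)
    -- (b) `ker g` has no nonzero element of finite order coprime to `p`
    (hg : ∀ x : G₁, g x = 0 → IsOfFinAddOrder x → (addOrderOf x).Coprime p → x = 0)
    -- (c) `h : F₁[p'] → F₂[p']` is surjective
    (hh : ∀ y : F₂, IsOfFinAddOrder y → (addOrderOf y).Coprime p →
        ∃ x : F₁, IsOfFinAddOrder x ∧ (addOrderOf x).Coprime p ∧ h x = y) :
    -- the induced map `lim_p G₁ → lim_p G₂` is injective …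
    (∀ x y : ℕ → G₁, (∀ n, p • x (n + 1) = x n) → (∀ n, p • y (n + 1) = y n) →
        (∀ n, g (x n) = g (y n)) → x = y) ∧
    -- … and surjective
    (∀ u : ℕ → G₂, (∀ n, p • u (n + 1) = u n) →
        ∃ x : ℕ → G₁, (∀ n, p • x (n + 1) = x n) ∧ ∀ n, g (x n) = u n) :=
  plim_map_bijective_of_diagram_general p hp i₁ π₁ i₂ π₂ f g h hπ₁ hex₁ hi₂ hex₂ hsq₁ hsq₂ hfsurj
    hfker hg hh
end
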